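/- arXiv:1902.10012 — 3 statements merged into one kernel-verified Lean document; each statement's English description precedes it below -/
import Mathlib

section
/- Let π be a group and 𝔸 a normal subgroup of π. The subgroups K_m of π defined recursively by K_1 = π, K_2 = 𝔸 ⊔ Γ_2π, and K_m = [K_{m−1}, K_1] ⊔ [K_{m−2}, K_2] for m ≥ 3 form an N-series of π: every K_m is a normal subgroup of π, K_{m+1} ≤ K_m for all m ≥ 1, and [K_i, K_j] ≤ K_{i+j} for all i, j ≥ 1. -/
/-!
All three properties are proved by induction along the defining recursion. Normality and the
inclusions `[K_i, K_1] ≤ K_{i+1}`, `[K_i, K_2] ≤ K_{i+2}` are immediate from the definition.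
For `j ≥ 3`, `K_j` is generated by `[K_{j-1}, K_1]` and `[K_{j-2}, K_2]`, and the three subgroups
lemma (modulo the normal subgroup `K_{i+j}`) bounds `[[K_a, K_b], K_i]` by the two rotated
commutators `[[K_b, K_i], K_a]` and `[[K_i, K_a], K_b]`, which the induction hypothesis for the
smaller indices `a` and `b` places in `K_{i+a+b}`.
-/

variable {π : Type*} [Group π]

/-- The series `(K_m)` associated to a (normal) subgroup `𝔸 = A` of `π`:
`K_1 = π`, `K_2 = 𝔸 ⊔ Γ₂π` and `K_m = [K_{m-1}, K_1] ⊔ [K_{m-2}, K_2]` for `m ≥ 3`.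
Here `Γ_m π = lowerCentralSeries π (m-1)`.  The value at `0` is a junk value `⊤`. -/
def altK (A : Subgroup π) : ℕ → Subgroup π
  | 0 => ⊤
  | 1 => ⊤
  | 2 => A ⊔ Subgroup.lowerCentralSeries (⊤ : Subgroup π) 1
  | (m + 3) => ⁅altK A (m + 2), altK A 1⁆ ⊔ ⁅altK A (m + 1), altK A 2⁆

namespace Subgroup

variable {G : Type*} [Group G] {N H K L : Subgroup G}

theorem commutator_le_iff_map_mk'_commutator_eq_bot (hN : N.Normal) :
    ⁅H, K⁆ ≤ N ↔ ⁅H.map (QuotientGroup.mk' N), K.map (QuotientGroup.mk' N)⁆ = ⊥ := by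
  rw [← map_commutator, map_eq_bot_iff, QuotientGroup.ker_mk']

theorem sup_commutator_le (hN : N.Normal) (hH : ⁅H, L⁆ ≤ N) (hK : ⁅K, L⁆ ≤ N) :
    ⁅H ⊔ K, L⁆ ≤ N := by
  rw [commutator_le_iff_map_mk'_commutator_eq_bot hN,
    commutator_eq_bot_iff_le_centralizer] at *
  rw [map_sup]
  exact sup_le hH hK

theorem commutator_commutator_le_of_rotate (hN : N.Normal)
    (h₁ : ⁅⁅K, L⁆, H⁆ ≤ N) (h₂ : ⁅⁅L, H⁆, K⁆ ≤ N) : ⁅⁅H, K⁆, L⁆ ≤ N := by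
  rw [commutator_le_iff_map_mk'_commutator_eq_bot hN, map_commutator] at *
  exact commutator_commutator_eq_bot_of_rotate h₁ h₂

end Subgroup

section altK

variable {A : Subgroup π}

theorem altK_one (A : Subgroup π) : altK A 1 = ⊤ := altK.eq_2 A

theorem altK_two (A : Subgroup π) :
    altK A 2 = A ⊔ Subgroup.lowerCentralSeries (⊤ : Subgroup π) 1 := altK.eq_3 A

theorem altK_add_three (A : Subgroup π) (m : ℕ) :
    altK A (m + 3) = ⁅altK A (m + 2), altK A 1⁆ ⊔ ⁅altK A (m + 1), altK A 2⁆ := altK.eq_4 A m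

theorem altK_normal (hA : A.Normal) : ∀ m, (altK A m).Normal
  | 0 => altK.eq_1 A ▸ Subgroup.normal_top
  | 1 => altK_one A ▸ Subgroup.normal_top
  | 2 => altK_two A ▸ Subgroup.sup_normal _ _
  | m + 3 => by
    have := altK_normal hA (m + 2)
    have := altK_normal hA (m + 1)
    have := altK_normal hA 1
    have := altK_normal hA 2
    rw [altK_add_three]
    infer_instance

theorem commutator_altK_one_le : ∀ i, 1 ≤ i → ⁅altK A i, altK A 1⁆ ≤ altK A (i + 1)
  | 1, _ => by
    rw [altK_one, altK_two]
    exact le_sup_right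
  | m + 2, _ => (altK_add_three A m).ge.trans' le_sup_left

theorem commutator_altK_two_le : ∀ i, 1 ≤ i → ⁅altK A i, altK A 2⁆ ≤ altK A (i + 2)
  | m + 1, _ => (altK_add_three A m).ge.trans' le_sup_right

theorem commutator_commutator_altK_le (hA : A.Normal) {a b : ℕ}
    (ha : ∀ i, 1 ≤ i → ⁅altK A i, altK A a⁆ ≤ altK A (i + a))
    (hb : ∀ i, 1 ≤ i → ⁅altK A i, altK A b⁆ ≤ altK A (i + b)) (i : ℕ) (hi : 1 ≤ i) :
    ⁅⁅altK A a, altK A b⁆, altK A i⁆ ≤ altK A (i + (a + b)) := by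
  apply Subgroup.commutator_commutator_le_of_rotate (altK_normal hA _)
  · calc ⁅⁅altK A b, altK A i⁆, altK A a⁆
        ≤ ⁅altK A (i + b), altK A a⁆ :=
          Subgroup.commutator_mono ((Subgroup.commutator_comm _ _).trans_le (hb i hi)) le_rfl
      _ ≤ altK A (i + b + a) := ha _ (by omega)
      _ = altK A (i + (a + b)) := by rw [Nat.add_comm a, Nat.add_assoc]
  · calc ⁅⁅altK A i, altK A a⁆, altK A b⁆
        ≤ ⁅altK A (i + a), altK A b⁆ := Subgroup.commutator_mono (ha i hi) le_rfl
      _ ≤ altK A (i + a + b) := hb _ (by omega)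
      _ = altK A (i + (a + b)) := by rw [Nat.add_assoc]

theorem commutator_altK_le (hA : A.Normal) :
    ∀ j, 1 ≤ j → ∀ i, 1 ≤ i → ⁅altK A i, altK A j⁆ ≤ altK A (i + j)
  | 1, _ => commutator_altK_one_le
  | 2, _ => commutator_altK_two_le
  | k + 3, _ => fun i hi => by
    rw [Subgroup.commutator_comm, altK_add_three]
    exact Subgroup.sup_commutator_le (altK_normal hA _)
      (commutator_commutator_altK_le hA (commutator_altK_le hA (k + 2) (by omega))
        commutator_altK_one_le i hi)
      (commutator_commutator_altK_le hA (commutator_altK_le hA (k + 1) (by omega))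
        commutator_altK_two_le i hi)

theorem altK_succ_le (hA : A.Normal) : ∀ m, 1 ≤ m → altK A (m + 1) ≤ altK A m
  | 1, _ => altK_one A ▸ le_top
  | m + 2, _ => by
    have := altK_normal hA (m + 2)
    rw [altK_add_three]
    refine sup_le (Subgroup.commutator_le_left _ _) ?_
    calc ⁅altK A (m + 1), altK A 2⁆ ≤ ⁅altK A (m + 1), altK A 1⁆ :=
          Subgroup.commutator_mono le_rfl (altK_one A ▸ le_top)
      _ ≤ altK A (m + 2) := commutator_altK_one_le (m + 1) (by omega)

end altK

/-- The subgroups `K_m` form an N-series of `π`: each `K_m` is normal, the sequence is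
decreasing, and `[K_i, K_j] ≤ K_{i+j}` for all `i, j ≥ 1`. -/
theorem altK_isNSeries (π : Type*) [Group π] (A : Subgroup π) (hA : A.Normal) :
    (∀ m : ℕ, 1 ≤ m → (altK A m).Normal) ∧
    (∀ m : ℕ, 1 ≤ m → altK A (m + 1) ≤ altK A m) ∧
    (∀ i j : ℕ, 1 ≤ i → 1 ≤ j → ⁅altK A i, altK A j⁆ ≤ altK A (i + j)) :=
  ⟨fun m _ => altK_normal hA m, altK_succ_le hA,
    fun i j hi hj => commutator_altK_le hA j hj i hi⟩
end

section
/- Let F be a free group and N a normal subgroup of F such that the quotient F/N is isomorphic to a free group. Then [F, N] = Γ_2F ∩ N, i.e. the commutator subgroup [F, N] generated by commutators of elements of F with elements of N equals the intersection of the commutator subgroup of F with N. -/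
/-!
Since `F ⧸ N` is free, the projection `F → F ⧸ N` has a homomorphic section `s`; let
`r = s ∘ mk`. Modulo `⁅⊤, N⁆` the elements of `N` are central, so the defect
`x ↦ x * (r x)⁻¹`, which takes values in `N`, becomes a homomorphism into the centre of
`F ⧸ ⁅⊤, N⁆`. It therefore kills `commutator F`, while on `N` (where `r = 1`) it is just the
projection. Hence `commutator F ⊓ N ≤ ⁅⊤, N⁆`; the other inclusion is immediate.
-/

namespace MonoidHom

variable {G H : Type*} [Group G] [Group H]

def divOfCentral (φ ψ : G →* H) (h : ∀ x, φ x * (ψ x)⁻¹ ∈ Subgroup.center H) : G →* H where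
  toFun x := φ x * (ψ x)⁻¹
  map_one' := by simp
  map_mul' x y := by
    rw [map_mul, map_mul, mul_inv_rev, mul_assoc, ← mul_assoc (φ y),
      ← (Subgroup.mem_center_iff.mp (h y) (ψ x)⁻¹), mul_assoc]

theorem divOfCentral_apply (φ ψ : G →* H) (h : ∀ x, φ x * (ψ x)⁻¹ ∈ Subgroup.center H) (x : G) :
    divOfCentral φ ψ h x = φ x * (ψ x)⁻¹ := rfl

theorem commutator_le_ker_of_range_le_center (f : G →* H) (h : f.range ≤ Subgroup.center H) :
    commutator G ≤ f.ker := by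
  rw [commutator_def, Subgroup.commutator_le]
  intro a _ b _
  rw [mem_ker, map_commutatorElement, commutatorElement_eq_one_iff_commute]
  exact Subgroup.mem_center_iff.mp (h ⟨b, rfl⟩) (f a)

end MonoidHom

namespace Subgroup

variable {G : Type*} [Group G]

theorem map_mk_commutator_top_le_center (N : Subgroup G) [N.Normal] :
    N.map (QuotientGroup.mk' ⁅(⊤ : Subgroup G), N⁆) ≤ center (G ⧸ ⁅(⊤ : Subgroup G), N⁆) := by
  rw [← commutator_top_left_eq_bot_iff_le_center,
    ← map_top_of_surjective _ (QuotientGroup.mk'_surjective _), ← map_commutator,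
    map_eq_bot_iff, QuotientGroup.ker_mk']

theorem commutator_top_eq_commutator_inf_of_rightInverse (N : Subgroup G) [N.Normal]
    {s : G ⧸ N →* G} (hs : Function.RightInverse s (QuotientGroup.mk' N)) :
    ⁅(⊤ : Subgroup G), N⁆ = _root_.commutator G ⊓ N := by
  refine le_antisymm (le_inf (commutator_mono le_top le_top) (commutator_le_right _ _)) ?_
  set π := QuotientGroup.mk' ⁅(⊤ : Subgroup G), N⁆
  set r := s.comp (QuotientGroup.mk' N)
  have hr_ker : ∀ n ∈ N, r n = 1 := fun n hn => by
    simp [r, (QuotientGroup.eq_one_iff n).mpr hn]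
  have hdefect_mem : ∀ x, x * (r x)⁻¹ ∈ N := fun x => by
    rw [← div_eq_mul_inv]
    exact QuotientGroup.eq_iff_div_mem.mp (hs (x : G ⧸ N)).symm
  have hdefect_central : ∀ x, π x * (π.comp r x)⁻¹ ∈ center (G ⧸ ⁅(⊤ : Subgroup G), N⁆) :=
    fun x => map_mk_commutator_top_le_center N ⟨_, hdefect_mem x, rfl⟩
  set δ := MonoidHom.divOfCentral π (π.comp r) hdefect_central
  have hδ : _root_.commutator G ≤ δ.ker :=
    δ.commutator_le_ker_of_range_le_center (by rintro _ ⟨x, rfl⟩; exact hdefect_central x)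
  rintro x ⟨hx_comm, hx_N⟩
  have hπx : π x = 1 := by
    simpa [δ, MonoidHom.divOfCentral_apply, hr_ker x hx_N] using hδ hx_comm
  exact (QuotientGroup.eq_one_iff x).mp hπx

end Subgroup

theorem FreeGroup.exists_rightInverse_of_surjective {Y G : Type*} [Group G]
    {f : G →* FreeGroup Y} (hf : Function.Surjective f) :
    ∃ s : FreeGroup Y →* G, Function.RightInverse s f := by
  refine ⟨FreeGroup.lift fun y => Function.surjInv hf (FreeGroup.of y), fun w => ?_⟩
  have hcomp : f.comp (FreeGroup.lift fun y => Function.surjInv hf (FreeGroup.of y)) =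
      MonoidHom.id _ :=
    FreeGroup.ext_hom _ _ fun y => by simp [Function.surjInv_eq]
  exact DFunLike.congr_fun hcomp w

/-- If F is a free group and N a normal subgroup of F such that F/N is (isomorphic to)
a free group, then [F, N] = Γ₂F ⊓ N. -/
theorem stmt11 (X Y : Type*) (N : Subgroup (FreeGroup X)) [N.Normal]
    (e : (FreeGroup X ⧸ N) ≃* FreeGroup Y) :
    ⁅(⊤ : Subgroup (FreeGroup X)), N⁆ = commutator (FreeGroup X) ⊓ N := by
  obtain ⟨s, hs⟩ := FreeGroup.exists_rightInverse_of_surjective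
    (f := e.toMonoidHom.comp (QuotientGroup.mk' N))
    (e.surjective.comp (QuotientGroup.mk'_surjective N))
  refine Subgroup.commutator_top_eq_commutator_inf_of_rightInverse N
    (s := s.comp e.toMonoidHom) fun q => e.injective ?_
  simpa using hs (e q)
end

section
/- Let g ≥ 1, let B be a free ℤ-module with basis (b_j)_{j=1,…,g} and A := Hom_ℤ(B, ℤ) with dual basis (a_j). In the tensor algebra T₀ of B, with canonical linear map ι : B → T₀, ring commutator ⁅u,v⁆ = uv − vu, and L : B ⊗ B → T₀ the linear map with L(x ⊗ y) = ⁅ι(x), ι(y)⁆, say that a pair (h, μ), where h is a ℤ-linear automorphism of B and μ : A → B ⊗ B a linear map with antisymmetric values, belongs to 𝒢 if ∑_{j=1}^g ⁅ι(h(b_j)), L(μ(a_j))⁆ = 0. Then 𝒢 is closed under the multiplication (h, μ)(f, ν) := (h ∘ f, (h ⊗ h) ∘ ν + μ ∘ f′) (where f′ is the transpose of f⁻¹ acting on A) and under the inversion (h, μ)⁻¹ := (h⁻¹, −(h⁻¹ ⊗ h⁻¹) ∘ μ ∘ h*), and it contains the identity (id_B, 0); that is, 𝒢 is a subgroup of Aut(B)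 × Hom(A, Λ²B). -/
/-!
The defining sum of `𝒢` is the image of the canonical element `∑ⱼ bⱼ ⊗ aⱼ` of `B ⊗ A` under the
bilinear map `(x, φ) ↦ ⁅ι (h x), L (μ φ)⁆`, and that element does not depend on the basis.
Hence precomposing `(h, μ)` with `(f, f′)` only changes the basis and leaves the sum unchanged,
while postcomposing with `(k, k ⊗ k)` applies to it the algebra endomorphism of `T₀` induced by
`k`, which respects brackets and commutes with `L`. Since the sum is additive in `μ`, closure
under products and inverses follows.
-/

open TensorProduct

noncomputable section

variable {g : ℕ} {B : Type*} [AddCommGroup B] [Module ℤ B]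

/-- Membership in the set 𝒢: the pair (h, μ) — h an automorphism of B, μ : A → B ⊗ B a
linear map with antisymmetric values, A = Dual ℤ B — satisfies
∑_j ⁅ι(h(b_j)), L(μ(a_j))⁆ = 0, where (a_j) = (b.coord j) is the dual basis of (b_j),
ι is the inclusion of B into its tensor algebra, and L(x ⊗ y) = ⁅ι x, ι y⁆. -/
def memG (b : Module.Basis (Fin g) ℤ B) (L : B ⊗[ℤ] B →ₗ[ℤ] TensorAlgebra ℤ B)
    (p : (B ≃ₗ[ℤ] B) × (Module.Dual ℤ B →ₗ[ℤ] B ⊗[ℤ] B)) : Prop :=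
  (∀ c : Module.Dual ℤ B, TensorProduct.comm ℤ B B (p.2 c) = - p.2 c) ∧
  ∑ j : Fin g, ⁅TensorAlgebra.ι ℤ (p.1 (b j)), L (p.2 (b.coord j))⁆ = 0

lemma Module.Basis.sum_apply_coord_eq {ι κ R M V : Type*} [Fintype ι] [Fintype κ]
    [CommSemiring R] [AddCommMonoid M] [Module R M] [AddCommMonoid V] [Module R V]
    (b : Module.Basis ι R M) (c : Module.Basis κ R M) (T : M →ₗ[R] Module.Dual R M →ₗ[R] V) :
    ∑ j, T (c j) (c.coord j) = ∑ i, T (b i) (b.coord i) := calc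
  ∑ j, T (c j) (c.coord j) = ∑ j, T (c j) (∑ i, c.coord j (b i) • b.coord i) := by
    simp only [b.sum_dual_apply_smul_coord]
  _ = ∑ i, T (∑ j, c.repr (b i) j • c j) (b.coord i) := by
    simp only [map_sum, map_smul, LinearMap.sum_apply, LinearMap.smul_apply, c.coord_apply]
    exact Finset.sum_comm
  _ = ∑ i, T (b i) (b.coord i) := by simp only [c.sum_repr]

lemma Module.Basis.coord_map {ι R M N : Type*} [CommSemiring R] [AddCommMonoid M] [Module R M]
    [AddCommMonoid N] [Module R N] (b : Module.Basis ι R M) (e : M ≃ₗ[R] N) (i : ι) :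
    (b.map e).coord i = e.symm.toLinearMap.dualMap (b.coord i) := by
  ext x
  simp [Module.Basis.coord_apply, Module.Basis.map_repr]

section BracketSum

attribute [local instance] LieRing.ofAssociativeRing LieAlgebra.ofAssociativeAlgebra

lemma TensorAlgebra.lift_ι_comp_lie {R M : Type*} [CommRing R] [AddCommGroup M] [Module R M]
    (k : M →ₗ[R] M) (u v : TensorAlgebra R M) :
    lift R (ι R ∘ₗ k) ⁅u, v⁆ = ⁅lift R (ι R ∘ₗ k) u, lift R (ι R ∘ₗ k) v⁆ :=
  (lift R (ι R ∘ₗ k)).toLieHom.map_lie u v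

variable (b : Module.Basis (Fin g) ℤ B) (L : B ⊗[ℤ] B →ₗ[ℤ] TensorAlgebra ℤ B)

def bracketSum (h : B →ₗ[ℤ] B) (μ : Module.Dual ℤ B →ₗ[ℤ] B ⊗[ℤ] B) : TensorAlgebra ℤ B :=
  ∑ j, ⁅TensorAlgebra.ι ℤ (h (b j)), L (μ (b.coord j))⁆

lemma memG_iff (p : (B ≃ₗ[ℤ] B) × (Module.Dual ℤ B →ₗ[ℤ] B ⊗[ℤ] B)) :
    memG b L p ↔ (∀ c, TensorProduct.comm ℤ B B (p.2 c) = - p.2 c) ∧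
      bracketSum b L p.1.toLinearMap p.2 = 0 :=
  Iff.rfl

lemma memG_one : memG b L (LinearEquiv.refl ℤ B, 0) := by
  simp [memG]

lemma bracketSum_add_right (h : B →ₗ[ℤ] B) (μ ν : Module.Dual ℤ B →ₗ[ℤ] B ⊗[ℤ] B) :
    bracketSum b L h (μ + ν) = bracketSum b L h μ + bracketSum b L h ν := by
  simp only [bracketSum, LinearMap.add_apply, map_add, lie_add, Finset.sum_add_distrib]

lemma bracketSum_neg_right (h : B →ₗ[ℤ] B) (μ : Module.Dual ℤ B →ₗ[ℤ] B ⊗[ℤ] B) :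
    bracketSum b L h (-μ) = -bracketSum b L h μ := by
  simp only [bracketSum, LinearMap.neg_apply, map_neg, lie_neg, Finset.sum_neg_distrib]

lemma bracketSum_comp_dualMap (h : B →ₗ[ℤ] B) (μ : Module.Dual ℤ B →ₗ[ℤ] B ⊗[ℤ] B)
    (e : B ≃ₗ[ℤ] B) :
    bracketSum b L (h ∘ₗ e.toLinearMap) (μ ∘ₗ e.symm.toLinearMap.dualMap) =
      bracketSum b L h μ := by
  let T : B →ₗ[ℤ] Module.Dual ℤ B →ₗ[ℤ] TensorAlgebra ℤ B :=
    (LieModule.toEnd ℤ (TensorAlgebra ℤ B) (TensorAlgebra ℤ B)).toLinearMap.compl₁₂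
      (TensorAlgebra.ι ℤ ∘ₗ h) (L ∘ₗ μ)
  simpa [T, bracketSum, Module.Basis.coord_map] using b.sum_apply_coord_eq (b.map e) T

variable {L} (hL : ∀ x y : B, L (x ⊗ₜ[ℤ] y) = ⁅TensorAlgebra.ι ℤ x, TensorAlgebra.ι ℤ y⁆)
include hL

lemma lift_ι_comp_L (k : B →ₗ[ℤ] B) (t : B ⊗[ℤ] B) :
    TensorAlgebra.lift ℤ (TensorAlgebra.ι ℤ ∘ₗ k) (L t) = L (TensorProduct.map k k t) := by
  induction t using TensorProduct.induction_on with
  | zero => simp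
  | tmul x y => simp [hL, TensorAlgebra.lift_ι_comp_lie]
  | add x y hx hy => simp only [map_add, hx, hy]

lemma bracketSum_comp_map (k h : B →ₗ[ℤ] B) (μ : Module.Dual ℤ B →ₗ[ℤ] B ⊗[ℤ] B) :
    bracketSum b L (k ∘ₗ h) (TensorProduct.map k k ∘ₗ μ) =
      TensorAlgebra.lift ℤ (TensorAlgebra.ι ℤ ∘ₗ k) (bracketSum b L h μ) := by
  simp [bracketSum, TensorAlgebra.lift_ι_comp_lie, lift_ι_comp_L hL]

lemma memG_mul {p q : (B ≃ₗ[ℤ] B) × (Module.Dual ℤ B →ₗ[ℤ] B ⊗[ℤ] B)}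
    (hp : memG b L p) (hq : memG b L q) :
    memG b L (q.1.trans p.1,
      (TensorProduct.map p.1.toLinearMap p.1.toLinearMap : B ⊗[ℤ] B →ₗ[ℤ] B ⊗[ℤ] B) ∘ₗ q.2
        + p.2 ∘ₗ q.1.symm.toLinearMap.dualMap) := by
  rw [memG_iff] at hp hq ⊢
  refine ⟨fun c => ?_, ?_⟩
  · simp only [LinearMap.add_apply, LinearMap.comp_apply, LinearMap.restrictScalars_apply,
      map_add, ← TensorProduct.map_comm, hp.1, hq.1, map_neg, neg_add]
  · change bracketSum b L (p.1.toLinearMap ∘ₗ q.1.toLinearMap) _ = 0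
    rw [bracketSum_add_right, bracketSum_comp_map b hL, hq.2, map_zero, zero_add,
      bracketSum_comp_dualMap, hp.2]

lemma memG_inv {p : (B ≃ₗ[ℤ] B) × (Module.Dual ℤ B →ₗ[ℤ] B ⊗[ℤ] B)} (hp : memG b L p) :
    memG b L (p.1.symm, -(TensorProduct.map p.1.symm.toLinearMap p.1.symm.toLinearMap ∘ₗ p.2
      ∘ₗ p.1.toLinearMap.dualMap : Module.Dual ℤ B →ₗ[ℤ] B ⊗[ℤ] B)) := by
  rw [memG_iff] at hp ⊢
  refine ⟨fun c => ?_, ?_⟩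
  · simp only [LinearMap.neg_apply, LinearMap.comp_apply, LinearMap.restrictScalars_apply,
      map_neg, ← TensorProduct.map_comm, hp.1, neg_neg]
  · have hsum : bracketSum b L LinearMap.id (p.2 ∘ₗ p.1.toLinearMap.dualMap) = 0 := by
      simpa using (bracketSum_comp_dualMap b L p.1.toLinearMap p.2 p.1.symm).trans hp.2
    have hnat := bracketSum_comp_map b hL p.1.symm.toLinearMap LinearMap.id
      (p.2 ∘ₗ p.1.toLinearMap.dualMap)
    rw [LinearMap.comp_id] at hnat
    rw [bracketSum_neg_right, hnat, hsum, map_zero, neg_zero]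

end BracketSum

theorem stmt15_general (g : ℕ) (B : Type*) [AddCommGroup B] [Module ℤ B]
    (b : Module.Basis (Fin g) ℤ B)
    (L : B ⊗[ℤ] B →ₗ[ℤ] TensorAlgebra ℤ B)
    (hL : ∀ x y : B, L (x ⊗ₜ[ℤ] y) = ⁅TensorAlgebra.ι ℤ x, TensorAlgebra.ι ℤ y⁆) :
    memG b L (LinearEquiv.refl ℤ B, 0) ∧
    (∀ p q, memG b L p → memG b L q →
      memG b L
        (q.1.trans p.1,
         (TensorProduct.map p.1.toLinearMap p.1.toLinearMap : B ⊗[ℤ] B →ₗ[ℤ] B ⊗[ℤ] B) ∘ₗ q.2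
           + p.2 ∘ₗ q.1.symm.toLinearMap.dualMap)) ∧
    (∀ p, memG b L p →
      memG b L
        (p.1.symm,
         -(TensorProduct.map p.1.symm.toLinearMap p.1.symm.toLinearMap ∘ₗ p.2
             ∘ₗ p.1.toLinearMap.dualMap : Module.Dual ℤ B →ₗ[ℤ] B ⊗[ℤ] B))) :=
  ⟨memG_one b L, fun _ _ => memG_mul b hL, fun _ => memG_inv b hL⟩

/-- 𝒢 contains the identity (id_B, 0), is closed under the multiplication
(h, μ)(f, ν) = (h ∘ f, (h ⊗ h) ∘ ν + μ ∘ f′) (f′ the transpose of f⁻¹), and is closed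
under the inversion (h, μ)⁻¹ = (h⁻¹, −(h⁻¹ ⊗ h⁻¹) ∘ μ ∘ h*); that is, 𝒢 is a subgroup
of Aut(B) × Hom(A, Λ²B). -/
theorem stmt15 (g : ℕ) (hg : 1 ≤ g) (B : Type*) [AddCommGroup B] [Module ℤ B]
    (b : Module.Basis (Fin g) ℤ B)
    (L : B ⊗[ℤ] B →ₗ[ℤ] TensorAlgebra ℤ B)
    (hL : ∀ x y : B, L (x ⊗ₜ[ℤ] y) = ⁅TensorAlgebra.ι ℤ x, TensorAlgebra.ι ℤ y⁆) :
    memG b L (LinearEquiv.refl ℤ B, 0) ∧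
    (∀ p q, memG b L p → memG b L q →
      memG b L
        (q.1.trans p.1,
         (TensorProduct.map p.1.toLinearMap p.1.toLinearMap : B ⊗[ℤ] B →ₗ[ℤ] B ⊗[ℤ] B) ∘ₗ q.2
           + p.2 ∘ₗ q.1.symm.toLinearMap.dualMap)) ∧
    (∀ p, memG b L p →
      memG b L
        (p.1.symm,
         -(TensorProduct.map p.1.symm.toLinearMap p.1.symm.toLinearMap ∘ₗ p.2
             ∘ₗ p.1.toLinearMap.dualMap : Module.Dual ℤ B →ₗ[ℤ] B ⊗[ℤ] B))) :=
  stmt15_general g B b L hL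

end
end
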